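/- Let d ≥ 1, ω ∈ ℝ, let λ, μ : ℝ^d → ℝ be continuously differentiable with λ(x) ≥ λ_min > 0 and μ(x) ≥ 0 for all x, and let v : ℝ^d → ℝ^d be smooth and compactly supported with ∫_{ℝ^d} |v(x)|² dx = 1. Write E(v) = ∇v + (∇v)ᵗ. If ∇(λ div v) + ω² v + ∇·(μ E(v)) = 0 holds pointwise on ℝ^d, then ∫_{ℝ^d} (div v(x))² dx ≤ ω²/λ_min. -/

import Mathlib

open MeasureTheory Matrix

open Set in
private lemma integral_partial_eq_zero {n : ℕ} (g : (Fin (n+1) → ℝ) → ℝ)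
    (hg : ContDiff ℝ 1 g) (hgc : HasCompactSupport g) (j : Fin (n+1)) :
    ∫ x, fderiv ℝ g x (Pi.single j 1) = 0 := by
  classical
  -- choose a radius R with tsupport g ⊆ ball 0 R in sup metric
  obtain ⟨R₀, hR₀⟩ := hgc.isBounded.subset_ball 0
  set R := max R₀ 1 with hR
  have hRpos : (0:ℝ) < R := lt_of_lt_of_le one_pos (le_max_right _ _)
  have hsub : tsupport g ⊆ Metric.ball 0 R :=
    hR₀.trans (Metric.ball_subset_ball (le_max_left _ _))
  have hcoord : ∀ y : Fin (n+1) → ℝ, y ∈ tsupport g → ∀ i, |y i| < R := by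
    intro y hy i
    have := hsub hy
    have h1 : dist (y i) 0 ≤ dist y 0 := dist_le_pi_dist y 0 i
    have h2 : dist y 0 < R := Metric.mem_ball.mp this
    simpa [Real.dist_eq] using lt_of_le_of_lt h1 h2
  set a : Fin (n+1) → ℝ := fun _ => -R with ha
  set b : Fin (n+1) → ℝ := fun _ => R with hb
  have hle : a ≤ b := fun i => by
    simp only [ha, hb]; linarith
  set f : Fin (n+1) → (Fin (n+1) → ℝ) → ℝ := fun i => if i = j then g else fun _ => 0 with hf
  set f' : Fin (n+1) → (Fin (n+1) → ℝ) → (Fin (n+1) → ℝ) →L[ℝ] ℝ :=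
    fun i x => if i = j then fderiv ℝ g x else 0 with hf'
  have hdiv : ∀ x, (∑ i, f' i x (Pi.single i 1)) = fderiv ℝ g x (Pi.single j 1) := by
    intro x
    rw [Finset.sum_eq_single j]
    · simp [hf']
    · intro i _ hij; simp [hf', hij]
    · intro h; simp at h
  have hcont : Continuous fun x => fderiv ℝ g x (Pi.single j 1) := by
    have h1 : Continuous (fderiv ℝ g) := hg.continuous_fderiv one_ne_zero
    exact (ContinuousLinearMap.apply ℝ ℝ (Pi.single j 1 : Fin (n+1) → ℝ)).continuous.comp h1
  have hcs : HasCompactSupport fun x => fderiv ℝ g x (Pi.single j 1) :=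
    hgc.fderiv_apply ℝ _
  have hint : Integrable fun x => fderiv ℝ g x (Pi.single j 1) :=
    hcont.integrable_of_hasCompactSupport hcs
  have key := MeasureTheory.integral_divergence_of_hasFDerivAt_off_countable' a b hle f f'
    ∅ Set.countable_empty
    (fun i => by
      by_cases h : i = j
      · subst h; simpa [hf] using hg.continuous.continuousOn
      · simp [hf, h]; exact continuousOn_const)
    (fun x _ i => by
      by_cases h : i = j
      · subst h; simpa [hf, hf'] using (hg.differentiable one_ne_zero x).hasFDerivAt
      · simp [hf, hf', h]; exact hasFDerivAt_const 0 x)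
    (by
      refine (hint.integrableOn).congr_fun ?_ measurableSet_Icc
      intro x _; exact (hdiv x).symm)
  -- RHS is zero
  have hzero : ∀ (i : Fin (n+1)) (c : ℝ), |c| = R →
      ∀ x : Fin n → ℝ, f i (i.insertNth c x) = 0 := by
    intro i c hc x
    by_cases h : i = j
    · subst h
      simp only [hf, if_pos rfl]
      by_contra hne
      have hmem : i.insertNth c x ∈ tsupport g := subset_tsupport g hne
      have := hcoord _ hmem i
      rw [Fin.insertNth_apply_same] at this
      rw [hc] at this; exact lt_irrefl _ this
    · simp [hf, h]
  have hfd0 : ∀ x, x ∉ tsupport g → fderiv ℝ g x = 0 := by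
    intro x hx
    have hmem : (tsupport g)ᶜ ∈ nhds x := (isClosed_tsupport g).isOpen_compl.mem_nhds hx
    have h1 : g =ᶠ[nhds x] (fun _ => 0) := by
      filter_upwards [hmem] with y hy using image_eq_zero_of_notMem_tsupport hy
    rw [h1.fderiv_eq]; exact fderiv_const_apply 0
  have hlhs : (∫ x in Icc a b, ∑ i, f' i x (Pi.single i 1))
      = ∫ x, fderiv ℝ g x (Pi.single j 1) := by
    rw [setIntegral_congr_fun measurableSet_Icc (fun x _ => hdiv x)]
    apply setIntegral_eq_integral_of_forall_compl_eq_zero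
    intro x hx
    have hxt : x ∉ tsupport g := by
      intro hmem
      apply hx
      rw [Set.mem_Icc]
      constructor <;> intro i <;>
        have := abs_lt.mp (hcoord x hmem i) <;> simp only [ha, hb] <;> linarith [this.1, this.2]
    rw [hfd0 x hxt]; simp
  rw [← hlhs, key]
  apply Finset.sum_eq_zero
  intro i _
  have h1 : ∀ x : Fin n → ℝ, f i (i.insertNth (b i) x) = 0 :=
    hzero i R (abs_of_pos hRpos) 
  have h2 : ∀ x : Fin n → ℝ, f i (i.insertNth (a i) x) = 0 :=
    hzero i (-R) (by rw [abs_neg, abs_of_pos hRpos])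
  simp only [ha, hb] at h1 h2 ⊢
  rw [integral_congr_ae (Filter.Eventually.of_forall h1), integral_congr_ae (Filter.Eventually.of_forall h2)]
  simp

private lemma integral_partial_eq_zero' {d : ℕ} (hd : 1 ≤ d) (g : (Fin d → ℝ) → ℝ)
    (hg : ContDiff ℝ 1 g) (hgc : HasCompactSupport g) (j : Fin d) :
    ∫ x, fderiv ℝ g x (Pi.single j 1) = 0 := by
  obtain ⟨n, rfl⟩ : ∃ n, d = n + 1 := ⟨d - 1, (Nat.succ_pred_eq_of_pos hd).symm⟩
  exact integral_partial_eq_zero g hg hgc j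

private lemma cont_fderiv_apply {d : ℕ} {f : (Fin d → ℝ) → ℝ} (hf : ContDiff ℝ 1 f)
    (y : Fin d → ℝ) : Continuous fun x => fderiv ℝ f x y :=
  (ContinuousLinearMap.apply ℝ ℝ y).continuous.comp (hf.continuous_fderiv one_ne_zero)

private lemma ibp {d : ℕ} (hd : 1 ≤ d) (f g : (Fin d → ℝ) → ℝ) (hf : ContDiff ℝ 1 f)
    (hg : ContDiff ℝ 1 g) (hgc : HasCompactSupport g) (j : Fin d) :
    ∫ x, fderiv ℝ f x (Pi.single j 1) * g x
      = - ∫ x, f x * fderiv ℝ g x (Pi.single j 1) := by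
  have hfg : ContDiff ℝ 1 (fun x => f x * g x) := hf.mul hg
  have hfgc : HasCompactSupport (fun x => f x * g x) := by
    apply HasCompactSupport.intro hgc
    intro x hx
    rw [image_eq_zero_of_notMem_tsupport hx, mul_zero]
  have h0 := integral_partial_eq_zero' hd _ hfg hfgc j
  have hder : ∀ x, fderiv ℝ (fun y => f y * g y) x (Pi.single j 1)
      = f x * fderiv ℝ g x (Pi.single j 1) + fderiv ℝ f x (Pi.single j 1) * g x := by
    intro x
    rw [fderiv_fun_mul (hf.differentiable one_ne_zero x) (hg.differentiable one_ne_zero x)]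
    simp [mul_comm]
  rw [integral_congr_ae (Filter.Eventually.of_forall hder)] at h0
  have hint1 : Integrable (fun x => f x * fderiv ℝ g x (Pi.single j 1)) := by
    apply Continuous.integrable_of_hasCompactSupport
      (hf.continuous.mul (cont_fderiv_apply hg _))
    apply HasCompactSupport.intro (hgc.fderiv ℝ (E := Fin d → ℝ))
    intro x hx
    have : fderiv ℝ g x = 0 := image_eq_zero_of_notMem_tsupport hx
    simp [this]
  have hint2 : Integrable (fun x => fderiv ℝ f x (Pi.single j 1) * g x) := by
    apply Continuous.integrable_of_hasCompactSupport
      ((cont_fderiv_apply hf _).mul hg.continuous)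
    apply HasCompactSupport.intro hgc
    intro x hx
    rw [Pi.mul_apply, image_eq_zero_of_notMem_tsupport hx, mul_zero]
  rw [integral_add hint1 hint2] at h0
  linarith

/-- Jacobian matrix `(∇v)_{ij} = ∂v_i/∂x_j`. -/
noncomputable def jac {d : ℕ} (u : (Fin d → ℝ) → (Fin d → ℝ)) (x : Fin d → ℝ) :
    Matrix (Fin d) (Fin d) ℝ :=
  Matrix.of fun i j => fderiv ℝ u x (Pi.single j 1) i

/-- `E(v) = ∇v + (∇v)ᵗ`. -/
noncomputable def Ef {d : ℕ} (u : (Fin d → ℝ) → (Fin d → ℝ)) (x : Fin d → ℝ) :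
    Matrix (Fin d) (Fin d) ℝ :=
  jac u x + (jac u x)ᵀ

/-- Divergence `div v = Σ_i ∂v_i/∂x_i`. -/
noncomputable def divg {d : ℕ} (u : (Fin d → ℝ) → (Fin d → ℝ)) (x : Fin d → ℝ) : ℝ :=
  ∑ i, jac u x i i

/-- Gradient of a scalar function. -/
noncomputable def gradf {d : ℕ} (p : (Fin d → ℝ) → ℝ) (x : Fin d → ℝ) : Fin d → ℝ :=
  fun i => fderiv ℝ p x (Pi.single i 1)

/-- Divergence of a matrix field: `(∇·M)_i = Σ_j ∂M_{ij}/∂x_j`. -/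
noncomputable def divMat {d : ℕ} (M : (Fin d → ℝ) → Matrix (Fin d) (Fin d) ℝ)
    (x : Fin d → ℝ) : Fin d → ℝ :=
  fun i => ∑ j, fderiv ℝ (fun y => M y i j) x (Pi.single j 1)

/-- Frobenius inner product `A : B = Σ_{ij} A_{ij} B_{ij}`. -/
def frob {d : ℕ} (A B : Matrix (Fin d) (Fin d) ℝ) : ℝ := ∑ i, ∑ j, A i j * B i j

/-- If `λ ≥ λ_min > 0`, `μ ≥ 0`, `v` is smooth, compactly supported, normalized in `L²`, and
solves the elasticity system `∇(λ div v) + ω² v + ∇·(μ E(v)) = 0`, then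
`∫ (div v)² ≤ ω²/λ_min`. -/
theorem div_sq_integral_le (d : ℕ) (hd : 1 ≤ d) (ω : ℝ) (lammin : ℝ) (hlammin : 0 < lammin)
    (lam μ : (Fin d → ℝ) → ℝ) (hlam : ContDiff ℝ 1 lam) (hμ : ContDiff ℝ 1 μ)
    (hlb : ∀ x, lammin ≤ lam x) (hμ0 : ∀ x, 0 ≤ μ x)
    (v : (Fin d → ℝ) → (Fin d → ℝ)) (hv : ContDiff ℝ (⊤ : ℕ∞) v) (hcv : HasCompactSupport v)
    (hnorm : ∫ x : Fin d → ℝ, ∑ i, (v x i) ^ 2 = 1)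
    (heq : ∀ x : Fin d → ℝ,
      gradf (fun y => lam y * divg v y) x + ω ^ 2 • v x
        + divMat (fun y => μ y • Ef v y) x = 0) :
    ∫ x : Fin d → ℝ, (divg v x) ^ 2 ≤ ω ^ 2 / lammin := by
  classical
  set K := tsupport v with hK
  have hKc : IsCompact K := hcv
  -- components of v
  set w : Fin d → (Fin d → ℝ) → ℝ := fun i x => v x i with hwdef
  have hv2 : ContDiff ℝ 2 v := hv.of_le (WithTop.coe_le_coe.mpr le_top)
  have hw : ∀ i, ContDiff ℝ 2 (w i) := fun i =>
    (ContinuousLinearMap.proj (R := ℝ) (φ := fun _ : Fin d => ℝ) i).contDiff.comp hv2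
  have hw1 : ∀ i, ContDiff ℝ 1 (w i) := fun i => (hw i).of_le one_le_two
  have hv0 : ∀ x, x ∉ K → ∀ i, w i x = 0 := by
    intro x hx i
    have : v x = 0 := image_eq_zero_of_notMem_tsupport hx
    simp [hwdef, this]
  -- partial derivatives
  set pd : Fin d → Fin d → (Fin d → ℝ) → ℝ :=
    fun i j x => fderiv ℝ (w i) x (Pi.single j 1) with hpddef
  have hjac : ∀ (x : Fin d → ℝ) i j, jac v x i j = pd i j x := by
    intro x i j
    have hfd : fderiv ℝ (w i) x = (ContinuousLinearMap.proj (R := ℝ)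
        (φ := fun _ : Fin d => ℝ) i).comp (fderiv ℝ v x) :=
      ((ContinuousLinearMap.proj (R := ℝ) (φ := fun _ : Fin d => ℝ)
        i).hasFDerivAt.comp x (hv.differentiable (by simp) x).hasFDerivAt).fderiv
    simp only [hpddef]; rw [hfd]; simp [jac]
  have hpd : ∀ i j, ContDiff ℝ 1 (pd i j) := fun i j =>
    (((hw i).fderiv_right (by norm_num)).clm_apply contDiff_const)
  have hpd0 : ∀ x, x ∉ K → ∀ i j, pd i j x = 0 := by
    intro x hx i j
    have hmem : Kᶜ ∈ nhds x := (isClosed_tsupport v).isOpen_compl.mem_nhds hx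
    have h1 : w i =ᶠ[nhds x] (fun _ => 0) := by
      filter_upwards [hmem] with y hy using by
        have : v y = 0 := image_eq_zero_of_notMem_tsupport hy
        simp [hwdef, this]
    have : fderiv ℝ (w i) x = 0 := by rw [h1.fderiv_eq]; exact fderiv_const_apply 0
    simp [hpddef, this]
  -- divergence
  set D : (Fin d → ℝ) → ℝ := fun x => ∑ i, pd i i x with hDdef
  have hdivg : ∀ x, divg v x = D x := by
    intro x; unfold divg; rw [hDdef]; exact Finset.sum_congr rfl fun i _ => hjac x i i
  have hD : ContDiff ℝ 1 D := ContDiff.sum fun i _ => hpd i i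
  -- P and Q
  set P : (Fin d → ℝ) → ℝ := fun x => lam x * D x with hPdef
  have hP : ContDiff ℝ 1 P := hlam.mul hD
  set Q : Fin d → Fin d → (Fin d → ℝ) → ℝ :=
    fun i j x => μ x * (pd i j x + pd j i x) with hQdef
  have hQ : ∀ i j, ContDiff ℝ 1 (Q i j) := fun i j =>
    hμ.mul ((hpd i j).add (hpd j i))
  -- rewrite the PDE
  have heq' : ∀ (x : Fin d → ℝ) (i : Fin d),
      fderiv ℝ P x (Pi.single i 1) + ω ^ 2 * w i x
        + ∑ j, fderiv ℝ (Q i j) x (Pi.single j 1) = 0 := by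
    intro x i
    have h1 := congrFun (heq x) i
    have h2 : (fun y => lam y * divg v y) = P := funext fun y => by rw [hPdef, hdivg]
    have h3 : ∀ j, (fun y => (μ y • Ef v y) i j) = Q i j := fun j => funext fun y => by
      simp [Ef, Matrix.smul_apply, Matrix.add_apply, Matrix.transpose_apply, hQdef,
        hjac y i j, hjac y j i, smul_eq_mul]
    simp only [Pi.add_apply, Pi.smul_apply, Pi.zero_apply, smul_eq_mul, gradf, divMat] at h1
    rw [h2] at h1
    simp_rw [fun j => h3 j] at h1
    exact h1
  -- compact supports and integrability helper
  have hwc : ∀ i, HasCompactSupport (w i) := fun i =>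
    HasCompactSupport.intro hKc (fun x hx => hv0 x hx i)
  have hintK : ∀ (f : (Fin d → ℝ) → ℝ), Continuous f → (∀ x, x ∉ K → f x = 0) →
      Integrable f := fun f hf h0 =>
    hf.integrable_of_hasCompactSupport (HasCompactSupport.intro hKc h0)
  have hD0 : ∀ x, x ∉ K → D x = 0 := fun x hx =>
    Finset.sum_eq_zero fun i _ => hpd0 x hx i i
  -- integrability of all integrands
  have intA : ∀ i, Integrable (fun x => fderiv ℝ P x (Pi.single i 1) * w i x) := fun i =>
    hintK _ ((cont_fderiv_apply hP _).mul (hw1 i).continuous)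
      (fun x hx => by rw [hv0 x hx i, mul_zero])
  have intPd : ∀ i, Integrable (fun x => P x * pd i i x) := fun i =>
    hintK _ (hP.continuous.mul (hpd i i).continuous)
      (fun x hx => by rw [hpd0 x hx i i, mul_zero])
  have intB : Integrable (fun x => ω ^ 2 * ∑ i, (w i x) ^ 2) :=
    hintK _ (continuous_const.mul (continuous_finset_sum _ fun i _ => (hw1 i).continuous.pow 2))
      (fun x hx => by
        rw [Finset.sum_eq_zero fun i _ => by rw [hv0 x hx i]; ring, mul_zero])
  have intC : ∀ i j, Integrable (fun x => fderiv ℝ (Q i j) x (Pi.single j 1) * w i x) :=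
    fun i j => hintK _ ((cont_fderiv_apply (hQ i j) _).mul (hw1 i).continuous)
      (fun x hx => by rw [hv0 x hx i, mul_zero])
  have intCsum : Integrable (fun x => ∑ i, ∑ j, fderiv ℝ (Q i j) x (Pi.single j 1) * w i x) :=
    integrable_finset_sum _ fun i _ => integrable_finset_sum _ fun j _ => intC i j
  have intQpd : ∀ i j, Integrable (fun x => Q i j x * pd i j x) := fun i j =>
    hintK _ ((hQ i j).continuous.mul (hpd i j).continuous)
      (fun x hx => by rw [hpd0 x hx i j, mul_zero])
  -- integration by parts: term 1
  have hA : ∫ x, (∑ i, fderiv ℝ P x (Pi.single i 1) * w i x) = -∫ x, P x * D x := by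
    rw [integral_finset_sum _ (fun i _ => intA i)]
    have h1 : ∀ i : Fin d, ∫ x, fderiv ℝ P x (Pi.single i 1) * w i x
        = -∫ x, P x * pd i i x := fun i => ibp hd P (w i) hP (hw1 i) (hwc i) i
    rw [Finset.sum_congr rfl (fun i _ => h1 i), Finset.sum_neg_distrib,
      ← integral_finset_sum _ (fun i _ => intPd i)]
    congr 1
    apply integral_congr_ae (Filter.Eventually.of_forall fun x => ?_)
    rw [hDdef, Finset.mul_sum]
  -- integration by parts: term 3
  have hC : ∫ x, (∑ i, ∑ j, fderiv ℝ (Q i j) x (Pi.single j 1) * w i x)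
      = -∫ x, ∑ i, ∑ j, Q i j x * pd i j x := by
    rw [integral_finset_sum _ (fun i _ => integrable_finset_sum _ fun j _ => intC i j)]
    have h1 : ∀ i : Fin d, ∫ x, ∑ j, fderiv ℝ (Q i j) x (Pi.single j 1) * w i x
        = -∫ x, ∑ j, Q i j x * pd i j x := by
      intro i
      rw [integral_finset_sum _ (fun j _ => intC i j),
        integral_finset_sum _ (fun j _ => intQpd i j),
        Finset.sum_congr rfl (fun j _ => ibp hd (Q i j) (w i) (hQ i j) (hw1 i) (hwc i) j),
        Finset.sum_neg_distrib]
    rw [Finset.sum_congr rfl (fun i _ => h1 i), Finset.sum_neg_distrib,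
      ← integral_finset_sum _ (fun i _ => integrable_finset_sum _ fun j _ => intQpd i j)]
  -- term 2
  have hB : ∫ x, (ω ^ 2 * ∑ i, (w i x) ^ 2) = ω ^ 2 := by
    rw [integral_const_mul]
    have : (∫ x, ∑ i, (w i x) ^ 2) = 1 := hnorm
    rw [this, mul_one]
  -- pointwise identity from the PDE
  have hpt : ∀ x, (∑ i, fderiv ℝ P x (Pi.single i 1) * w i x)
      = -(ω ^ 2 * ∑ i, (w i x) ^ 2)
        - (∑ i, ∑ j, fderiv ℝ (Q i j) x (Pi.single j 1) * w i x) := by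
    intro x
    have h0 : (∑ i, (fderiv ℝ P x (Pi.single i 1) + ω ^ 2 * w i x
        + ∑ j, fderiv ℝ (Q i j) x (Pi.single j 1)) * w i x) = 0 :=
      Finset.sum_eq_zero fun i _ => by rw [heq' x i, zero_mul]
    have h1 : (∑ i, (fderiv ℝ P x (Pi.single i 1) + ω ^ 2 * w i x
        + ∑ j, fderiv ℝ (Q i j) x (Pi.single j 1)) * w i x)
        = (∑ i, fderiv ℝ P x (Pi.single i 1) * w i x)
          + (ω ^ 2 * ∑ i, (w i x) ^ 2)
          + (∑ i, ∑ j, fderiv ℝ (Q i j) x (Pi.single j 1) * w i x) := by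
      rw [Finset.mul_sum, ← Finset.sum_add_distrib, ← Finset.sum_add_distrib]
      refine Finset.sum_congr rfl fun i _ => ?_
      rw [add_mul, add_mul, Finset.sum_mul]
      ring
    rw [h1] at h0
    linarith
  -- combine
  have hmain : ∫ x, P x * D x = ω ^ 2 - ∫ x, ∑ i, ∑ j, Q i j x * pd i j x := by
    have h2 : ∫ x, (∑ i, fderiv ℝ P x (Pi.single i 1) * w i x)
        = ∫ x, (-(ω ^ 2 * ∑ i, (w i x) ^ 2)
          - (∑ i, ∑ j, fderiv ℝ (Q i j) x (Pi.single j 1) * w i x)) :=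
      integral_congr_ae (Filter.Eventually.of_forall hpt)
    have intBneg : Integrable (fun x => -(ω ^ 2 * ∑ i, (w i x) ^ 2)) := intB.neg
    rw [integral_sub intBneg intCsum, integral_neg, hB, hC, hA] at h2
    linarith
  -- nonnegativity of the Q-term
  have hQnn : 0 ≤ ∫ x, ∑ i, ∑ j, Q i j x * pd i j x := by
    refine integral_nonneg fun x => ?_
    show (0:ℝ) ≤ ∑ i, ∑ j, Q i j x * pd i j x
    have ha : ∀ (a : Fin d → Fin d → ℝ),
        0 ≤ ∑ i, ∑ j, (a i j + a j i) * a i j := by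
      intro a
      have hsq : (0:ℝ) ≤ ∑ i, ∑ j, (a i j + a j i) ^ 2 :=
        Finset.sum_nonneg fun i _ => Finset.sum_nonneg fun j _ => sq_nonneg _
      have h1 : (∑ i, ∑ j, (a i j + a j i) * a j i)
          = ∑ i, ∑ j, (a i j + a j i) * a i j := by
        rw [Finset.sum_comm]
        exact Finset.sum_congr rfl fun i _ => Finset.sum_congr rfl fun j _ => by ring
      have h2 : (∑ i, ∑ j, (a i j + a j i) ^ 2)
          = (∑ i, ∑ j, (a i j + a j i) * a i j)
            + ∑ i, ∑ j, (a i j + a j i) * a j i := by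
        rw [← Finset.sum_add_distrib]
        refine Finset.sum_congr rfl fun i _ => ?_
        rw [← Finset.sum_add_distrib]
        refine Finset.sum_congr rfl fun j _ => ?_
        ring
      rw [h1] at h2
      linarith
    have hterm : (∑ i, ∑ j, Q i j x * pd i j x)
        = μ x * ∑ i, ∑ j, (pd i j x + pd j i x) * pd i j x := by
      rw [Finset.mul_sum]
      refine Finset.sum_congr rfl fun i _ => ?_
      rw [Finset.mul_sum]
      refine Finset.sum_congr rfl fun j _ => ?_
      rw [hQdef]; ring
    rw [hterm]
    exact mul_nonneg (hμ0 x) (ha fun i j => pd i j x)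
  have hPD : ∫ x, P x * D x ≤ ω ^ 2 := by rw [hmain]; linarith
  -- lower bound by lammin
  have intD2 : Integrable (fun x => D x ^ 2) :=
    hintK _ (hD.continuous.pow 2) (fun x hx => by rw [hD0 x hx]; ring)
  have intPD : Integrable (fun x => P x * D x) :=
    hintK _ (hP.continuous.mul hD.continuous) (fun x hx => by rw [hD0 x hx, mul_zero])
  have hlow : lammin * ∫ x, D x ^ 2 ≤ ∫ x, P x * D x := by
    rw [← integral_const_mul]
    apply integral_mono (intD2.const_mul lammin) intPD
    intro x
    show lammin * D x ^ 2 ≤ P x * D x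
    have hx : P x * D x = lam x * D x ^ 2 := by rw [hPdef]; ring
    rw [hx]
    exact mul_le_mul_of_nonneg_right (hlb x) (sq_nonneg _)
  have hgoal : (∫ x, D x ^ 2) ≤ ω ^ 2 / lammin := by
    rw [le_div_iff₀ hlammin]
    calc (∫ x, D x ^ 2) * lammin = lammin * ∫ x, D x ^ 2 := by ring
      _ ≤ ∫ x, P x * D x := hlow
      _ ≤ ω ^ 2 := hPD
  calc ∫ x, (divg v x) ^ 2 = ∫ x, D x ^ 2 := by
        apply integral_congr_ae (Filter.Eventually.of_forall fun x => ?_)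
        rw [hdivg]
    _ ≤ ω ^ 2 / lammin := hgoal
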